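/- arXiv:1308.1415 — 8 statements merged into one kernel-verified Lean document; each statement's English description precedes it below -/
import Mathlib

section
/- The subspace L²₀(F) is invariant under π, and the restriction π₀ of π to L²₀(F) is irreducible: for every g ∈ G one has π(g)(L²₀(F)) ⊆ L²₀(F), and every ℂ-linear subspace W ⊆ L²₀(F) satisfying π(g)W ⊆ W for all g ∈ G is either {0} or all of L²₀(F). -/
/-- `L²₀(F)`: the subspace of functions `F → ℂ` whose values sum to zero. -/
noncomputable def L20 (F : Type*) [Field F] [Fintype F] : Submodule ℂ (F → ℂ) where
  carrier := {f | ∑ x, f x = 0}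
  add_mem' := by
    intro f g hf hg
    simp only [Set.mem_setOf_eq, Pi.add_apply, Finset.sum_add_distrib] at *
    rw [hf, hg, add_zero]
  zero_mem' := by simp
  smul_mem' := by
    intro c f hf
    simp only [Set.mem_setOf_eq, Pi.smul_apply, smul_eq_mul, ← Finset.mul_sum] at *
    rw [hf, mul_zero]

/-!
For a sum-zero `f`, averaging the dilates `x ↦ f (x / a)` over `a ∈ Fˣ` gives
`f 0 • (q δ₀ - 1)`: at `x ≠ 0` the points `x / a` run once through `Fˣ`, where `f` sums to `-f 0`.
So a nonzero invariant subspace `W ≤ L²₀(F)` contains, after a translation making `f 0 ≠ 0`,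
the function `q δ₀ - 1`, hence all its translates `q δ_b - 1`; these span `L²₀(F)`, because
`q g = ∑ b, g b • (q δ_b - 1)` whenever `g` sums to zero.
-/

open Finset

section SumsOverFiniteFields

variable {F M : Type*} [Field F] [Fintype F]

lemma sum_comp_affine [AddCommMonoid M] (a : Fˣ) (b : F) (f : F → M) :
    ∑ x, f ((x - b) / a) = ∑ x, f x :=
  Fintype.sum_equiv ((Equiv.subRight b).trans (Equiv.divRight₀ a a.ne_zero)) _ _ fun _ => rfl

variable [DecidableEq F]

lemma sum_units_eq_sum_sub_apply_zero [AddCommGroup M] (f : F → M) :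
    ∑ a : Fˣ, f a = ∑ x, f x - f 0 := by
  rw [Fintype.sum_eq_add_sum_subtype_ne f 0, add_sub_cancel_left]
  exact Fintype.sum_equiv unitsEquivNeZero _ _ fun _ => rfl

lemma sum_units_comp_div_left [AddCommMonoid M] {x : F} (hx : x ≠ 0) (f : F → M) :
    ∑ a : Fˣ, f (x / a) = ∑ a : Fˣ, f a :=
  Fintype.sum_equiv (Equiv.divLeft (Units.mk0 x hx)) _ _ fun _ => by simp

lemma sum_units_comp_div_of_sum_eq_zero [AddCommGroup M] {f : F → M} (hf : ∑ x, f x = 0)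
    (x : F) : ∑ a : Fˣ, f (x / a) = Fintype.card F • (Pi.single 0 (f 0) : F → M) x - f 0 := by
  by_cases hx : x = 0
  · subst hx
    simpa using sum_units_eq_sum_sub_apply_zero fun _ : F => f 0
  · rw [sum_units_comp_div_left hx, sum_units_eq_sum_sub_apply_zero, hf]
    simp [hx]

end SumsOverFiniteFields

section AffineInvariance

variable {F : Type*} [Field F]

def IsAffineInvariant (W : Submodule ℂ (F → ℂ)) : Prop :=
  ∀ (a : Fˣ) (b : F), ∀ f ∈ W, (fun x => f ((x - b) / (a : F))) ∈ W

namespace IsAffineInvariant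

variable {W : Submodule ℂ (F → ℂ)} {f : F → ℂ}

lemma comp_sub_right_mem (hW : IsAffineInvariant W) (hf : f ∈ W) (b : F) :
    (fun x => f (x - b)) ∈ W := by
  simpa using hW 1 b f hf

lemma comp_div_mem (hW : IsAffineInvariant W) (hf : f ∈ W) (a : Fˣ) :
    (fun x => f (x / a)) ∈ W := by
  simpa using hW a 0 f hf

end IsAffineInvariant

end AffineInvariance

section L20

variable {F : Type*} [Field F] [Fintype F]

lemma mem_L20 {f : F → ℂ} : f ∈ L20 F ↔ ∑ x, f x = 0 := Iff.rfl

lemma L20_isAffineInvariant : IsAffineInvariant (L20 F) := fun a b f hf => by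
  rw [mem_L20, sum_comp_affine]
  exact hf

section CenteredDelta

variable [DecidableEq F]

def centeredDelta (F : Type*) [Field F] [Fintype F] [DecidableEq F] (b : F) : F → ℂ :=
  (Fintype.card F : ℂ) • Pi.single b 1 - 1

lemma centeredDelta_comp_sub_right (b : F) :
    (fun x => centeredDelta F 0 (x - b)) = centeredDelta F b := by
  funext x
  simp [centeredDelta, Pi.single_apply, sub_eq_zero]

lemma sum_units_comp_div_eq_smul_centeredDelta {f : F → ℂ} (hf : f ∈ L20 F) :
    ∑ a : Fˣ, (fun x => f (x / a)) = f 0 • centeredDelta F 0 := by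
  funext x
  rw [Finset.sum_apply, sum_units_comp_div_of_sum_eq_zero hf]
  simp only [Pi.single_apply, smul_ite, nsmul_eq_mul, centeredDelta, Pi.smul_apply,
    Pi.sub_apply, smul_eq_mul, mul_ite, mul_one, mul_zero, Pi.one_apply]
  split_ifs <;> ring

lemma sum_smul_centeredDelta {g : F → ℂ} (hg : g ∈ L20 F) :
    ∑ x, g x • centeredDelta F x = (Fintype.card F : ℂ) • g := by
  funext y
  simp only [centeredDelta, Finset.sum_apply, Pi.smul_apply, Pi.sub_apply, Pi.single_apply,
    smul_eq_mul, mul_ite, mul_one, mul_zero, Pi.one_apply, mul_sub, sum_sub_distrib, sum_ite_eq,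
    mem_univ, ↓reduceIte, mem_L20.1 hg, sub_zero]
  ring

lemma L20_le_of_forall_centeredDelta_mem {W : Submodule ℂ (F → ℂ)}
    (h : ∀ b, centeredDelta F b ∈ W) : L20 F ≤ W := by
  intro g hg
  have hq : (Fintype.card F : ℂ) ≠ 0 := Nat.cast_ne_zero.2 Fintype.card_ne_zero
  rw [← W.smul_mem_iff hq, ← sum_smul_centeredDelta hg]
  exact W.sum_mem fun x _ => W.smul_mem _ (h x)

namespace IsAffineInvariant

variable {W : Submodule ℂ (F → ℂ)}

lemma centeredDelta_zero_mem (hW : IsAffineInvariant W) (hWL : W ≤ L20 F) (hne : W ≠ ⊥) :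
    centeredDelta F 0 ∈ W := by
  obtain ⟨f, hfW, hf0⟩ := Submodule.exists_mem_ne_zero_of_ne_bot hne
  obtain ⟨c, hc⟩ := Function.ne_iff.1 hf0
  have hgW := hW.comp_sub_right_mem hfW (-c)
  have hsum := W.sum_mem fun a (_ : a ∈ univ) => hW.comp_div_mem hgW a
  rw [sum_units_comp_div_eq_smul_centeredDelta (hWL hgW)] at hsum
  exact (W.smul_mem_iff (by simpa using hc)).1 hsum

lemma centeredDelta_mem (hW : IsAffineInvariant W) (hWL : W ≤ L20 F) (hne : W ≠ ⊥) (b : F) :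
    centeredDelta F b ∈ W :=
  centeredDelta_comp_sub_right (F := F) b ▸
    hW.comp_sub_right_mem (hW.centeredDelta_zero_mem hWL hne) b

end IsAffineInvariant

end CenteredDelta

end L20

/-- The subspace `L²₀(F)` is invariant under the representation
`(π(a,b)f)(x) = f((x-b)/a)` of the affine group of `F`, and the restriction of `π`
to `L²₀(F)` is irreducible. -/
theorem statement_0 {F : Type*} [Field F] [Fintype F] :
    (∀ (a : Fˣ) (b : F), ∀ f ∈ L20 F, (fun x => f ((x - b) / (a : F))) ∈ L20 F) ∧
    (∀ W : Submodule ℂ (F → ℂ), W ≤ L20 F →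
      (∀ (a : Fˣ) (b : F), ∀ f ∈ W, (fun x => f ((x - b) / (a : F))) ∈ W) →
      W = ⊥ ∨ W = L20 F) := by
  classical
  refine ⟨L20_isAffineInvariant, fun W hWL hW => or_iff_not_imp_left.2 fun hne => ?_⟩
  have hW : IsAffineInvariant W := hW
  exact le_antisymm hWL (L20_le_of_forall_centeredDelta_mem (hW.centeredDelta_mem hWL hne))
end

section
/- Let k be an integer with ζ^k ≠ 1. If φ ∈ L²(F) satisfies π((u,0))φ = ζ^k·φ (that is, φ(u^{−1}x) = ζ^k φ(x) for all x ∈ F), then φ is a complex scalar multiple of φ_{k,0}. -/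
/-!
Writing `c = ζ^k`, the eigen-equation at `x = 0` reads `φ 0 = c φ 0`, so `φ 0 = 0` since `c ≠ 1`,
and at `x = u^(j+1)` it gives `φ (u^(j+1)) = c⁻¹ φ (u^j)`, so `φ (u^j) = c^(-j) φ 1`.
The function `φ_{k,0}` obeys the same law, and a function on `F` is determined by its values at `0`
and at the powers of the generator `u`.
-/

section Eigenfunction

variable {F K : Type*} [GroupWithZero F] [Field K]

theorem apply_zero_eq_zero_of_apply_inv_mul_eq {f : F → K} {u : F} {c : K} (hc : c ≠ 1)
    (hf : ∀ x, f (u⁻¹ * x) = c * f x) : f 0 = 0 := by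
  have h := hf 0
  rw [mul_zero] at h
  exact (mul_left_eq_self₀.mp h.symm).resolve_left hc

theorem apply_pow_eq_of_apply_inv_mul_eq {f : F → K} {u : F} (hu : u ≠ 0) {c : K} (hc : c ≠ 0)
    (hf : ∀ x, f (u⁻¹ * x) = c * f x) (j : ℕ) : f (u ^ j) = c⁻¹ ^ j * f 1 := by
  induction j with
  | zero => simp
  | succ j ih =>
    have step : f (u ^ j) = c * f (u ^ (j + 1)) := by
      rw [← hf, pow_succ', inv_mul_cancel_left₀ hu]
    rw [pow_succ' c⁻¹, mul_assoc, ← ih, step, inv_mul_cancel_left₀ hc]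

theorem eq_smul_of_apply_pow_eq [Finite F] {u : Fˣ} (hu : ∀ x : Fˣ, x ∈ Subgroup.zpowers u)
    {a : K} {f g : F → K} (hf0 : f 0 = 0) (hg0 : g 0 = 0)
    (hf : ∀ j : ℕ, f ((u : F) ^ j) = a ^ j * f 1) (hg : ∀ j : ℕ, g ((u : F) ^ j) = a ^ j * g 1)
    (hg1 : g 1 ≠ 0) : f = (f 1 / g 1) • g := by
  funext x
  rcases eq_or_ne x 0 with rfl | hx
  · simp [hf0, hg0]
  · obtain ⟨j, hj⟩ := mem_powers_iff_mem_zpowers.mpr (hu (Units.mk0 x hx))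
    obtain rfl : (u : F) ^ j = x := by simpa using congrArg Units.val hj
    rw [Pi.smul_apply, smul_eq_mul, hf, hg]
    field_simp

end Eigenfunction

/-- If `ζ^k ≠ 1` and `φ ∈ L²(F)` satisfies `π((u,0))φ = ζ^k φ`, i.e.
`φ(u⁻¹x) = ζ^k φ(x)` for all `x`, then `φ` is a scalar multiple of `φ_{k,0}`,
the function with `φ_{k,0}(0) = 0` and `φ_{k,0}(u^j) = ζ^{-kj}/√(q-1)`. -/
theorem statement_3 {F : Type*} [Field F] [Fintype F]
    (u : Fˣ) (hu : ∀ x : Fˣ, x ∈ Subgroup.zpowers u)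
    (ζ : ℂ) (hζ : ζ = Complex.exp (2 * Real.pi * Complex.I / ((Fintype.card F : ℂ) - 1)))
    (k : ℤ) (hk : ζ ^ k ≠ 1)
    (φk0 : F → ℂ) (hφk0zero : φk0 0 = 0)
    (hφk0 : ∀ j : ℕ, φk0 ((u : F) ^ j) =
      ζ ^ (-(k * (j : ℤ))) / (Real.sqrt ((Fintype.card F : ℝ) - 1) : ℂ))
    (φ : F → ℂ) (hφ : ∀ x : F, φ (((u : F))⁻¹ * x) = ζ ^ k * φ x) :
    ∃ z : ℂ, φ = z • φk0 := by
  have hζ0 : ζ ≠ 0 := hζ ▸ Complex.exp_ne_zero _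
  have hφk0_one : φk0 1 = 1 / (Real.sqrt ((Fintype.card F : ℝ) - 1) : ℂ) := by
    simpa using hφk0 0
  have hφk0_pow (j : ℕ) : φk0 ((u : F) ^ j) = (ζ ^ k)⁻¹ ^ j * φk0 1 := by
    rw [hφk0, hφk0_one, neg_mul_eq_mul_neg, zpow_mul, zpow_neg, zpow_natCast, inv_pow]
    ring
  have hφk0_one_ne : φk0 1 ≠ 0 := by
    have hq : (1 : ℝ) < Fintype.card F := by exact_mod_cast Fintype.one_lt_card
    rw [hφk0_one]
    exact one_div_ne_zero (Complex.ofReal_ne_zero.mpr (Real.sqrt_pos.mpr (by linarith)).ne')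
  exact ⟨_, eq_smul_of_apply_pow_eq hu (apply_zero_eq_zero_of_apply_inv_mul_eq hk hφ)
    hφk0zero (apply_pow_eq_of_apply_inv_mul_eq (Units.ne_zero u) (zpow_ne_zero k hζ0) hφ)
    hφk0_pow hφk0_one_ne⟩
end

section
/- Assume q > 2 and let b ∈ F and c = (u,b) ∈ G. Then ψ_{b/(1−u)} ∈ L²₀(F) and π(c)·ψ_{b/(1−u)} = ψ_{b/(1−u)}; moreover, if φ ∈ L²₀(F) satisfies π(c)φ = φ, then φ = z·ψ_{b/(1−u)} for some z ∈ ℂ. -/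
/-- `φ_{0,0}`: the function with `φ_{0,0}(0) = 0` and `φ_{0,0}(u^j) = 1/√(q-1)` for
`u^j ∈ F^×` (i.e. on every nonzero element). -/
noncomputable def phi00 (F : Type*) [Field F] [Fintype F] [DecidableEq F] : F → ℂ :=
  fun x => if x = 0 then 0 else 1 / (Real.sqrt ((Fintype.card F : ℝ) - 1) : ℂ)

/-- `ψ_0 = (φ_{0,0} - √(q-1)·δ_0)/√q`. -/
noncomputable def psi0 (F : Type*) [Field F] [Fintype F] [DecidableEq F] : F → ℂ :=
  fun x => (phi00 F x - (Real.sqrt ((Fintype.card F : ℝ) - 1) : ℂ) *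
      (if x = 0 then 1 else 0)) / (Real.sqrt (Fintype.card F) : ℂ)

/-- `ψ_v(x) = ψ_0(x - v)`. -/
noncomputable def psi (F : Type*) [Field F] [Fintype F] [DecidableEq F] (v : F) : F → ℂ :=
  fun x => psi0 F (x - v)

/-!
The point `v = b/(1-u)` is the fixed point of `x ↦ ux + b` (here `q > 2` forces `u ≠ 1`), and in
the coordinate `w = x - v` the action of `c` is `w ↦ w/u`. Since `u` generates `F^×`, a fixed
function is constant on `F \ {v}`; a function that is constant off `v` and sums to zero is
determined up to scale by that constant. `ψ_v` is such a function with nonzero constant value.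
-/

theorem ne_one_of_forall_mem_zpowers {G : Type*} [Group G] [Nontrivial G] {u : G}
    (hu : ∀ x : G, x ∈ Subgroup.zpowers u) : u ≠ 1 := by
  rintro rfl
  obtain ⟨x, hx⟩ := exists_ne (1 : G)
  exact hx (by simpa using hu x)

theorem apply_zpow_smul_eq {G X α : Type*} [Group G] [MulAction G X] {u : G} {g : X → α}
    (hg : ∀ y, g (u • y) = g y) (n : ℤ) (y : X) : g (u ^ n • y) = g y := by
  induction n using Int.induction_on generalizing y with
  | zero => simp
  | succ n ih => rw [zpow_add_one, mul_smul, ih, hg]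
  | pred n ih => rw [zpow_sub_one, mul_smul, ih, ← hg, smul_inv_smul]

theorem apply_eq_apply_one_of_apply_mul_eq {F α : Type*} [Field F] {u : Fˣ}
    (hu : ∀ x : Fˣ, x ∈ Subgroup.zpowers u) {g : F → α} (hg : ∀ y, g (u * y) = g y)
    {y : F} (hy : y ≠ 0) : g y = g 1 := by
  obtain ⟨n, hn⟩ := hu (Units.mk0 y hy)
  have hyn : ((u ^ n : Fˣ) : F) = y := congrArg Units.val hn
  simpa [Units.smul_def, hyn] using apply_zpow_smul_eq (u := u) hg n 1

theorem eq_smul_of_sum_eq_zero_of_forall_ne {ι K : Type*} [Fintype ι] [Field K] {f g : ι → K}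
    {v : ι} {c d : K} (hd : d ≠ 0) (hf : ∑ x, f x = 0) (hg : ∑ x, g x = 0)
    (hfc : ∀ x ≠ v, f x = c) (hgd : ∀ x ≠ v, g x = d) : f = (c / d) • g := by
  set h := f - (c / d) • g
  have hh : ∀ x ≠ v, h x = 0 := fun x hx => by simp [h, hfc x hx, hgd x hx, hd]
  have hhv : h v = 0 := by
    rw [← Finset.sum_eq_single_of_mem v (Finset.mem_univ v) fun x _ hx => hh x hx]
    simp [h, Finset.sum_sub_distrib, ← Finset.mul_sum, hf, hg]
  funext x
  rw [← sub_eq_zero]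
  by_cases hx : x = v
  · exact hx ▸ hhv
  · exact hh x hx

theorem sub_div_sub_of_mul_add_eq {F : Type*} [Field F] {u b v : F} (hu : u ≠ 0)
    (hv : u * v + b = v) (x : F) : (x - b) / u - v = (x - v) / u := by
  field_simp
  linear_combination -hv

section

variable (F : Type*) [Field F] [Fintype F]

theorem one_le_card_sub_one : (1 : ℝ) ≤ (Fintype.card F : ℝ) - 1 := by
  have : (2 : ℝ) ≤ Fintype.card F := by exact_mod_cast Fintype.one_lt_card
  linarith

theorem sqrt_card_sub_one_ne_zero : Real.sqrt ((Fintype.card F : ℝ) - 1) ≠ 0 := by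
  have := one_le_card_sub_one F
  positivity

variable [DecidableEq F]

theorem sum_phi00 : ∑ x, phi00 F x = Real.sqrt ((Fintype.card F : ℝ) - 1) := by
  have hA := Complex.ofReal_ne_zero.mpr (sqrt_card_sub_one_ne_zero F)
  simp only [phi00, Finset.sum_ite, Finset.sum_const_zero, Finset.sum_const, zero_add,
    Finset.filter_ne', Finset.card_erase_of_mem (Finset.mem_univ _), Finset.card_univ, nsmul_eq_mul]
  field_simp
  rw [← Complex.ofReal_pow, Real.sq_sqrt (by linarith [one_le_card_sub_one F]),
    Nat.cast_sub Fintype.card_pos]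
  push_cast
  rfl

theorem sum_psi0 : ∑ x, psi0 F x = 0 := by
  simp only [psi0, ← Finset.sum_div, Finset.sum_sub_distrib, ← Finset.mul_sum,
    Finset.sum_ite_eq', Finset.mem_univ, if_true, sum_phi00, mul_one, sub_self, zero_div]

theorem psi_mem_L20 (v : F) : psi F v ∈ L20 F :=
  ((Equiv.subRight v).sum_comp (psi0 F)).trans (sum_psi0 F)

variable {F}

theorem psi0_mul {a : F} (ha : a ≠ 0) (y : F) : psi0 F (a * y) = psi0 F y := by
  simp [psi0, phi00, ha]

theorem psi0_one_ne_zero : psi0 F 1 ≠ 0 := by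
  have hB : Real.sqrt (Fintype.card F) ≠ 0 := by
    rw [Real.sqrt_ne_zero']
    exact_mod_cast Fintype.card_pos
  simp [psi0, phi00, sqrt_card_sub_one_ne_zero, hB]

end

/-- For `c = (u,b)`, the state `ψ_{b/(1-u)}` lies in `L²₀(F)` and is fixed by `π(c)`;
moreover every `π(c)`-fixed vector in `L²₀(F)` is a scalar multiple of `ψ_{b/(1-u)}`. -/
theorem statement_4 {F : Type*} [Field F] [Fintype F] [DecidableEq F]
    (hq : 2 < Fintype.card F)
    (u : Fˣ) (hu : ∀ x : Fˣ, x ∈ Subgroup.zpowers u) (b : F) :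
    psi F (b / (1 - (u : F))) ∈ L20 F ∧
    (∀ x : F, psi F (b / (1 - (u : F))) ((x - b) / (u : F)) = psi F (b / (1 - (u : F))) x) ∧
    (∀ φ : F → ℂ, φ ∈ L20 F → (∀ x : F, φ ((x - b) / (u : F)) = φ x) →
      ∃ z : ℂ, φ = z • psi F (b / (1 - (u : F)))) := by
  have hu1 : (u : F) ≠ 1 := by
    have : Nontrivial Fˣ :=
      Fintype.one_lt_card_iff_nontrivial.mp (by rw [Fintype.card_units]; omega)
    exact fun h => ne_one_of_forall_mem_zpowers hu (Units.ext h)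
  have hv : (u : F) * (b / (1 - u)) + b = b / (1 - u) := by
    field_simp [sub_ne_zero.mpr hu1.symm]
    ring
  set v := b / (1 - (u : F))
  have hdiv (x : F) : (x - b) / u - v = (x - v) / u := sub_div_sub_of_mul_add_eq u.ne_zero hv x
  refine ⟨psi_mem_L20 F v, fun x => ?_, fun φ hφ hφfix => ?_⟩
  · rw [psi, psi, hdiv, div_eq_inv_mul, psi0_mul (inv_ne_zero u.ne_zero)]
  have hφconst : ∀ x ≠ v, φ x = φ (v + 1) := fun x hx => by
    refine (congrArg φ (add_sub_cancel v x)).symm.trans ?_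
    refine apply_eq_apply_one_of_apply_mul_eq hu (g := fun w => φ (v + w)) (fun w => ?_)
      (sub_ne_zero.mpr hx)
    rw [← hφfix, eq_add_of_sub_eq' (hdiv _), add_sub_cancel_left,
      mul_div_cancel_left₀ _ u.ne_zero]
  have hψconst : ∀ x ≠ v, psi F v x = psi0 F 1 := fun x hx => by
    rw [psi, ← mul_one (x - v), psi0_mul (sub_ne_zero.mpr hx)]
  exact ⟨_, eq_smul_of_sum_eq_zero_of_forall_ne psi0_one_ne_zero hφ (psi_mem_L20 F v)
    hφconst hψconst⟩
end

section
/- Assume q > 2, let b ∈ F, c = (u,b) ∈ G, and let k be an integer with ζ^k ≠ 1. Then φ_{k,b/(1−u)} ∈ L²₀(F) and π(c)·φ_{k,b/(1−u)} = ζ^k·φ_{k,b/(1−u)}; moreover, if φ ∈ L²₀(F) satisfies π(c)φ = ζ^k·φ, then φ = z·φ_{k,b/(1−u)} for some z ∈ ℂ. -/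
lemma sub_mem_L20_iff {F : Type*} [Field F] [Fintype F] (f : F → ℂ) (v : F) :
    (fun x => f (x - v)) ∈ L20 F ↔ f ∈ L20 F := by
  change ∑ x, f (x - v) = 0 ↔ ∑ x, f x = 0
  rw [Fintype.sum_equiv (Equiv.subRight v) (fun x => f (x - v)) f fun _ => rfl]

lemma sub_div_sub_div_one_sub {F : Type*} [Field F] {u : F} (hu0 : u ≠ 0) (hu1 : u ≠ 1)
    (x b : F) : (x - b) / u - b / (1 - u) = (x - b / (1 - u)) / u := by
  have : 1 - u ≠ 0 := sub_ne_zero.mpr hu1.symm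
  field_simp
  ring

lemma eq_zero_of_eq_mul_of_ne_one {M₀ : Type*} [MonoidWithZero M₀] [IsRightCancelMulZero M₀]
    {a b : M₀} (ha : a ≠ 1) (h : b = a * b) : b = 0 := by
  by_contra hb
  exact ha ((mul_eq_right₀ hb).mp h.symm)

section Dilation

variable {F K : Type*} [Field F] [Field K] {u : Fˣ} {μ : K}

lemma exists_pow_eq_of_forall_mem_zpowers [Finite F] (hu : ∀ x : Fˣ, x ∈ Subgroup.zpowers u)
    {y : F} (hy : y ≠ 0) : ∃ j : ℕ, (u : F) ^ j = y := by
  obtain ⟨j, hj⟩ := mem_powers_iff_mem_zpowers.mpr (hu (Units.mk0 y hy))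
  exact ⟨j, by simpa using congrArg Units.val hj⟩

lemma eq_zero_of_dilation_eigen [Finite F] (hu : ∀ x : Fˣ, x ∈ Subgroup.zpowers u) (hμ : μ ≠ 1)
    {ψ : F → K} (hψ : ∀ y, ψ (y / u) = μ * ψ y) (h1 : ψ 1 = 0) : ψ = 0 := by
  have h0 : ψ 0 = 0 := by
    refine eq_zero_of_eq_mul_of_ne_one hμ ?_
    simpa using hψ 0
  -- `ψ` vanishes along the orbit `1, u⁻¹, u⁻², …`, which is all of `F^×`.
  have hinv : ∀ j : ℕ, ψ ((u : F) ^ j)⁻¹ = 0 := by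
    intro j
    induction j with
    | zero => simpa using h1
    | succ j ih => rw [pow_succ, mul_inv, ← div_eq_mul_inv, hψ, ih, mul_zero]
  funext y
  rcases eq_or_ne y 0 with rfl | hy
  · exact h0
  · obtain ⟨j, hj⟩ := exists_pow_eq_of_forall_mem_zpowers hu (inv_ne_zero hy)
    simpa [hj] using hinv j

lemma eq_smul_of_dilation_eigen [Finite F] (hu : ∀ x : Fˣ, x ∈ Subgroup.zpowers u) (hμ : μ ≠ 1)
    {ψ χ : F → K} (hψ : ∀ y, ψ (y / u) = μ * ψ y) (hχ : ∀ y, χ (y / u) = μ * χ y)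
    (hχ1 : χ 1 ≠ 0) : ψ = (ψ 1 / χ 1) • χ := by
  refine sub_eq_zero.mp (eq_zero_of_dilation_eigen hu hμ (fun y => ?_) ?_)
  · simp only [Pi.sub_apply, Pi.smul_apply, smul_eq_mul, hψ, hχ]
    ring
  · simp [div_mul_cancel₀ _ hχ1]

lemma sum_eq_zero_of_dilation_eigen [Fintype F] (hμ : μ ≠ 1) {ψ : F → K}
    (hψ : ∀ y, ψ (y / u) = μ * ψ y) : ∑ y, ψ y = 0 := by
  refine eq_zero_of_eq_mul_of_ne_one hμ ?_
  calc ∑ y, ψ y = ∑ y, ψ (y / u) :=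
        (Fintype.sum_equiv (Equiv.mulRight₀ (u : F)⁻¹ (inv_ne_zero u.ne_zero))
          (fun y => ψ (y / u)) ψ fun _ => by simp [div_eq_mul_inv]).symm
    _ = μ * ∑ y, ψ y := by simp only [hψ, Finset.mul_sum]

lemma dilation_eigen_of_apply_pow [Finite F] (hu : ∀ x : Fˣ, x ∈ Subgroup.zpowers u)
    {ζ c : K} (hζ : ζ ≠ 0) {k : ℤ} {φ : F → K} (h0 : φ 0 = 0)
    (hpow : ∀ j : ℕ, φ ((u : F) ^ j) = ζ ^ (-(k * (j : ℤ))) / c) (y : F) :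
    φ (y / u) = ζ ^ k * φ y := by
  rcases eq_or_ne y 0 with rfl | hy
  · simp [h0]
  obtain ⟨j, hj⟩ := exists_pow_eq_of_forall_mem_zpowers hu (div_ne_zero hy u.ne_zero)
  have hy' : y = (u : F) ^ (j + 1) := by rw [pow_succ, hj, div_mul_cancel₀ _ u.ne_zero]
  rw [← hj, hy', hpow, hpow, mul_div_assoc', ← zpow_add₀ hζ]
  push_cast
  ring_nf

end Dilation

lemma dilation_eigen_of_affine_eigen {F K : Type*} [Field F] [Mul K] {u : F} (hu0 : u ≠ 0)
    (hu1 : u ≠ 1) {b : F} {μ : K} {φ : F → K} (hφ : ∀ x, φ ((x - b) / u) = μ * φ x) (y : F) :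
    φ (y / u + b / (1 - u)) = μ * φ (y + b / (1 - u)) := by
  have h := sub_div_sub_div_one_sub hu0 hu1 (y + b / (1 - u)) b
  rw [add_sub_cancel_right, sub_eq_iff_eq_add] at h
  rw [← h, hφ]

theorem statement_5_general {F : Type*} [Field F] [Fintype F]
    (u : Fˣ) (hu : ∀ x : Fˣ, x ∈ Subgroup.zpowers u)
    (ζ : ℂ) (hζ : ζ = Complex.exp (2 * Real.pi * Complex.I / ((Fintype.card F : ℂ) - 1)))
    (k : ℤ) (hk : ζ ^ k ≠ 1)
    (φk0 : F → ℂ) (hφk0zero : φk0 0 = 0)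
    (hφk0 : ∀ j : ℕ, φk0 ((u : F) ^ j) =
      ζ ^ (-(k * (j : ℤ))) / (Real.sqrt ((Fintype.card F : ℝ) - 1) : ℂ))
    (b : F) :
    (fun x => φk0 (x - b / (1 - (u : F)))) ∈ L20 F ∧
    (∀ x : F, φk0 ((x - b) / (u : F) - b / (1 - (u : F))) =
      ζ ^ k * φk0 (x - b / (1 - (u : F)))) ∧
    (∀ φ : F → ℂ, φ ∈ L20 F → (∀ x : F, φ ((x - b) / (u : F)) = ζ ^ k * φ x) →
      ∃ z : ℂ, φ = z • fun x => φk0 (x - b / (1 - (u : F)))) := by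
  have hstep : ∀ y, φk0 (y / u) = ζ ^ k * φk0 y :=
    dilation_eigen_of_apply_pow hu (hζ ▸ Complex.exp_ne_zero _) hφk0zero hφk0
  have hφ1 : φk0 1 ≠ 0 := by
    have hq : (1 : ℝ) < Fintype.card F := by exact_mod_cast Fintype.one_lt_card
    rw [← pow_zero (u : F), hφk0 0]
    refine div_ne_zero (by simp) (Complex.ofReal_ne_zero.mpr (Real.sqrt_pos.mpr ?_).ne')
    linarith
  -- `u = 1` would make `1` a fixed point of the dilation, forcing `ζ ^ k = 1`.
  have hu1 : (u : F) ≠ 1 := fun h1 =>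
    hφ1 (eq_zero_of_eq_mul_of_ne_one hk (by simpa [h1] using hstep 1))
  refine ⟨(sub_mem_L20_iff φk0 _).mpr (sum_eq_zero_of_dilation_eigen hk hstep),
    fun x => ?_, fun φ _ hφ => ?_⟩
  · rw [sub_div_sub_div_one_sub u.ne_zero hu1, hstep]
  · have hψ := eq_smul_of_dilation_eigen hu hk (ψ := fun y => φ (y + b / (1 - u)))
      (dilation_eigen_of_affine_eigen u.ne_zero hu1 hφ) hstep hφ1
    refine ⟨φ (1 + b / (1 - u)) / φk0 1, funext fun x => ?_⟩
    simpa using congrFun hψ (x - b / (1 - u))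

/-- For `c = (u,b)` and `ζ^k ≠ 1`, the wavelet `φ_{k,b/(1-u)}` lies in `L²₀(F)` and is an
eigenvector of `π(c)` with eigenvalue `ζ^k`; moreover every `ζ^k`-eigenvector of `π(c)` in
`L²₀(F)` is a scalar multiple of `φ_{k,b/(1-u)}`.  Here `φ_{k,0}` is the function with
`φ_{k,0}(0) = 0` and `φ_{k,0}(u^j) = ζ^{-kj}/√(q-1)`, and `φ_{k,v}(x) = φ_{k,0}(x-v)`. -/
theorem statement_5 {F : Type*} [Field F] [Fintype F] [DecidableEq F]
    (hq : 2 < Fintype.card F)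
    (u : Fˣ) (hu : ∀ x : Fˣ, x ∈ Subgroup.zpowers u)
    (ζ : ℂ) (hζ : ζ = Complex.exp (2 * Real.pi * Complex.I / ((Fintype.card F : ℂ) - 1)))
    (k : ℤ) (hk : ζ ^ k ≠ 1)
    (φk0 : F → ℂ) (hφk0zero : φk0 0 = 0)
    (hφk0 : ∀ j : ℕ, φk0 ((u : F) ^ j) =
      ζ ^ (-(k * (j : ℤ))) / (Real.sqrt ((Fintype.card F : ℝ) - 1) : ℂ))
    (b : F) :
    (fun x => φk0 (x - b / (1 - (u : F)))) ∈ L20 F ∧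
    (∀ x : F, φk0 ((x - b) / (u : F) - b / (1 - (u : F))) =
      ζ ^ k * φk0 (x - b / (1 - (u : F)))) ∧
    (∀ φ : F → ℂ, φ ∈ L20 F → (∀ x : F, φ ((x - b) / (u : F)) = ζ ^ k * φ x) →
      ∃ z : ℂ, φ = z • fun x => φk0 (x - b / (1 - (u : F)))) :=
  statement_5_general u hu ζ hζ k hk φk0 hφk0zero hφk0 b
end

section
/- If H is a subgroup of G that is maximal (i.e., H ≠ G and the only subgroups containing H are H and G), is not normal in G, and is cyclic, then H = C_b for some b ∈ F. -/
/-! If `H = ⟨g⟩` with `g.a = 1`, then `H` lies in the translation subgroup, the kernel of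
`g ↦ g.a`; by maximality `H` is that normal subgroup, or the kernel is everything and the group
is abelian, so `H` would be normal either way. Otherwise `g` fixes `x₀ = g.b / (1 - g.a)`. The
stabilizer of `x₀` is the image of `Fˣ` under `c ↦ (c, (1 - c) x₀)`, hence the cyclic subgroup
generated by `(u, (1 - u) x₀)`; it is proper since translations move `x₀`, so maximality forces
`H` to be it. -/

/-- The affine group of a field `F`: the pair `(a, b)` represents the
transformation `x ↦ a * x + b` of `F`. -/
structure Aff (F : Type*) [Field F] where
  a : Fˣ
  b : F

namespace Aff

variable {F : Type*} [Field F]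

instance : Mul (Aff F) := ⟨fun g h => ⟨g.a * h.a, (g.a : F) * h.b + g.b⟩⟩
instance : One (Aff F) := ⟨⟨1, 0⟩⟩
instance : Inv (Aff F) := ⟨fun g => ⟨g.a⁻¹, -(((g.a⁻¹ : Fˣ) : F) * g.b)⟩⟩

@[simp] lemma mul_a (g h : Aff F) : (g * h).a = g.a * h.a := rfl
@[simp] lemma mul_b (g h : Aff F) : (g * h).b = (g.a : F) * h.b + g.b := rfl
@[simp] lemma one_a : (1 : Aff F).a = 1 := rfl
@[simp] lemma one_b : (1 : Aff F).b = 0 := rfl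
@[simp] lemma inv_a (g : Aff F) : (g⁻¹).a = g.a⁻¹ := rfl
@[simp] lemma inv_b (g : Aff F) : (g⁻¹).b = -(((g.a⁻¹ : Fˣ) : F) * g.b) := rfl

@[ext] lemma ext {g h : Aff F} (ha : g.a = h.a) (hb : g.b = h.b) : g = h := by
  cases g; cases h; simp_all

instance : Group (Aff F) where
  mul_assoc g h k := by
    ext
    · simp [mul_assoc]
    · simp [mul_add, mul_assoc, add_assoc]
  one_mul g := by ext <;> simp
  mul_one g := by ext <;> simp
  inv_mul_cancel g := by ext <;> simp

end Aff

namespace Aff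

variable {F : Type*} [Field F]

def linearPart : Aff F →* Fˣ where
  toFun g := g.a
  map_one' := rfl
  map_mul' _ _ := rfl

lemma mem_ker_linearPart {g : Aff F} : g ∈ (linearPart : Aff F →* Fˣ).ker ↔ g.a = 1 := Iff.rfl

lemma isMulCommutative_of_ker_linearPart_eq_top (h : (linearPart : Aff F →* Fˣ).ker = ⊤) :
    IsMulCommutative (Aff F) := by
  have ha (g : Aff F) : g.a = 1 := mem_ker_linearPart.mp (h ▸ Subgroup.mem_top g)
  refine ⟨⟨fun g k => ?_⟩⟩
  ext
  · simp [ha g, ha k]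
  · simp only [mul_b, ha g, ha k, Units.val_one, one_mul, add_comm]

instance : MulAction (Aff F) F where
  smul g x := g.a * x + g.b
  one_smul x := by
    change ((1 : Fˣ) : F) * x + 0 = x
    simp
  mul_smul g h x := by
    change ((g.a * h.a : Fˣ) : F) * x + ((g.a : F) * h.b + g.b) = g.a * (h.a * x + h.b) + g.b
    push_cast
    ring

lemma smul_def (g : Aff F) (x : F) : g • x = g.a * x + g.b := rfl

lemma stabilizer_ne_top (x : F) : MulAction.stabilizer (Aff F) x ≠ ⊤ := by
  intro h
  have hmem : (⟨1, 1⟩ : Aff F) • x = x := by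
    rw [← MulAction.mem_stabilizer_iff, h]
    exact Subgroup.mem_top _
  simp [smul_def] at hmem

lemma mem_stabilizer_of_a_ne_one {g : Aff F} (hg : g.a ≠ 1) :
    g ∈ MulAction.stabilizer (Aff F) (g.b / (1 - g.a)) := by
  have hsub : (1 : F) - g.a ≠ 0 := sub_ne_zero.mpr fun h => hg (Units.ext h.symm)
  rw [MulAction.mem_stabilizer_iff, smul_def]
  field_simp
  ring

def homothety (x₀ : F) : Fˣ →* Aff F where
  toFun c := ⟨c, (1 - (c : F)) * x₀⟩
  map_one' := by ext <;> simp
  map_mul' c d := by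
    ext
    · rfl
    · change (1 - ((c * d : Fˣ) : F)) * x₀ = (c : F) * ((1 - (d : F)) * x₀) + (1 - (c : F)) * x₀
      push_cast
      ring

lemma range_homothety (x₀ : F) :
    (homothety x₀).range = MulAction.stabilizer (Aff F) x₀ := by
  ext g
  rw [MonoidHom.mem_range, MulAction.mem_stabilizer_iff, smul_def]
  constructor
  · rintro ⟨c, rfl⟩
    change (c : F) * x₀ + (1 - (c : F)) * x₀ = x₀
    ring
  · intro hg
    refine ⟨g.a, Aff.ext rfl ?_⟩
    change (1 - (g.a : F)) * x₀ = g.b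
    linear_combination -hg

lemma zpowers_homothety_eq_stabilizer {u : Fˣ} (hu : ∀ x : Fˣ, x ∈ Subgroup.zpowers u)
    (x₀ : F) : Subgroup.zpowers (homothety x₀ u) = MulAction.stabilizer (Aff F) x₀ := by
  rw [← MonoidHom.map_zpowers, (Subgroup.eq_top_iff' _).mpr hu, ← MonoidHom.range_eq_map,
    range_homothety]

end Aff

theorem statement_7_general {F : Type*} [Field F]
    (u : Fˣ) (hu : ∀ x : Fˣ, x ∈ Subgroup.zpowers u)
    (H : Subgroup (Aff F))
    (hmax : ∀ K : Subgroup (Aff F), H ≤ K → K = H ∨ K = ⊤)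
    (hnonnormal : ¬ H.Normal)
    (hcyclic : ∃ g : Aff F, H = Subgroup.zpowers g) :
    ∃ b : F, H = Subgroup.zpowers (⟨u, b⟩ : Aff F) := by
  obtain ⟨g, rfl⟩ := hcyclic
  by_cases ha : g.a = 1
  · exfalso
    rcases hmax _ (Subgroup.zpowers_le.mpr (Aff.mem_ker_linearPart.mpr ha)) with hK | hK
    · exact hnonnormal (hK ▸ Aff.linearPart.normal_ker)
    · have := Aff.isMulCommutative_of_ker_linearPart_eq_top hK
      exact hnonnormal inferInstance
  · have hg := Aff.mem_stabilizer_of_a_ne_one ha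
    rw [← Aff.zpowers_homothety_eq_stabilizer hu] at hg
    rcases hmax _ (Subgroup.zpowers_le.mpr hg) with hK | hK
    · exact ⟨_, hK.symm⟩
    · exact (Aff.stabilizer_ne_top _ (Aff.zpowers_homothety_eq_stabilizer hu _ ▸ hK)).elim

/-- Every maximal, non-normal, cyclic subgroup of the affine group of a finite field
is `C_b = ⟨(u,b)⟩` for some `b ∈ F`. -/
theorem statement_7 {F : Type*} [Field F] [Fintype F]
    (u : Fˣ) (hu : ∀ x : Fˣ, x ∈ Subgroup.zpowers u)
    (H : Subgroup (Aff F))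
    (hne : H ≠ ⊤)
    (hmax : ∀ K : Subgroup (Aff F), H ≤ K → K = H ∨ K = ⊤)
    (hnonnormal : ¬ H.Normal)
    (hcyclic : ∃ g : Aff F, H = Subgroup.zpowers g) :
    ∃ b : F, H = Subgroup.zpowers (⟨u, b⟩ : Aff F) :=
  statement_7_general u hu H hmax hnonnormal hcyclic
end

section
/- Assume q > 2 and let b ∈ F, r ∈ ℤ, and x ∈ F with x ≠ b/(1−u). Define v ∈ L²(F^× × F) by v = (1/√(q−1)) Σ_{j=0}^{q−2} δ_{u^{j+r}} ⊗ δ_{u^j x + ((u^j−1)/(u−1))b}, and let w = (F_M ⊗ I)v. Then: (i) w(1, y) = 1/(q−1) for every y ∈ F with y ≠ b/(1−u), and w(1, b/(1−u)) = 0; (ii) for every integer k with ζ^k ≠ 1, the function f_k : F → ℂ, f_k(y) = w(u^k, y), is a nonzero complex scalar multiple of φ_{−k, b/(1−u)}. -/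
/-!
The affine map `y ↦ u * y + b` fixes `c = b / (1 - u)`, so the `j`-th point of the orbit of `x`
is `c + u ^ j * (x - c) = c + u ^ (j + s)`, where `x - c = u ^ s`. Thus `v` is a sum of deltas
at `(u ^ (j + r), c + u ^ (j + s))`. As `u ^ j = u ^ a` exactly when `j ≡ a [ZMOD q - 1]` and
`j ↦ ζ ^ (k * j)` is `(q - 1)`-periodic, each Fourier sum collapses to a single term:
`w (u ^ k, c + u ^ t) = ζ ^ (k * (t - s + r)) / (q - 1)` and `w (u ^ k, c) = 0`.
For `k = 0` this is (i), and in general it is `ζ ^ (k * (r - s)) / √(q - 1)` times `φ_{-k, c}`.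
-/

open Finset Function

theorem periodic_zpow_mul {G₀ : Type*} [GroupWithZero G₀] {ζ : G₀} {n : ℕ} (hζ : ζ ^ n = 1)
    (k : ℤ) : Periodic (fun j : ℤ => ζ ^ (k * j)) n := by
  intro j
  rcases eq_or_ne n 0 with rfl | hn
  · simp
  have hζ0 : ζ ≠ 0 := by rintro rfl; simp [zero_pow hn] at hζ
  simp only [mul_add, zpow_add₀ hζ0, mul_comm k (n : ℤ), zpow_mul, zpow_natCast, hζ, one_zpow,
    mul_one]

theorem Complex.exp_two_pi_I_div_natCast_sub_one_pow (m : ℕ) :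
    exp (2 * Real.pi * I / ((m : ℂ) - 1)) ^ (m - 1) = 1 := by
  rcases m with _ | _ | n
  · simp
  · simp
  · simpa using (isPrimitiveRoot_exp (n + 1) n.succ_ne_zero).pow_eq_one

section OrderOf

variable {G : Type*} [Group G] [DecidableEq G] {g : G}

theorem sum_range_orderOf_ite_zpow_eq {M : Type*} [AddCommMonoid M] (hg : IsOfFinOrder g)
    {f : ℤ → M} (hf : Periodic f (orderOf g)) (a : ℤ) :
    ∑ j ∈ range (orderOf g), (if g ^ (j : ℤ) = g ^ a then f j else 0) = f a := by
  have hn : (0 : ℤ) < orderOf g := by exact_mod_cast hg.orderOf_pos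
  have hcond : ∀ j ∈ range (orderOf g), g ^ (j : ℤ) = g ^ a ↔ j = (a % orderOf g).toNat := by
    intro j hj
    rw [zpow_eq_zpow_iff_modEq, Int.ModEq,
      Int.emod_eq_of_lt (Int.natCast_nonneg j) (by simpa using hj)]
    have := Int.emod_nonneg a hn.ne'
    omega
  rw [sum_congr rfl fun j hj => if_congr (hcond j hj) rfl rfl, sum_ite_eq',
    if_pos (mem_range.2 (by have := Int.emod_lt_of_pos a hn; omega)),
    Int.toNat_of_nonneg (Int.emod_nonneg a hn.ne'), Int.emod_def, mul_comm]
  simpa using hf.sub_int_mul_eq (x := a) (a / orderOf g)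

theorem sum_range_mul_sum_range_ite_prod_eq {Y M : Type*} [DecidableEq Y] [Semiring M]
    (hg : IsOfFinOrder g) {f : ℤ → M} (hf : Periodic f (orderOf g)) (P : ℕ → Y) (r : ℤ) (y : Y) :
    ∑ j ∈ range (orderOf g), f j *
        ∑ i ∈ range (orderOf g), (if (g ^ (j : ℤ), y) = (g ^ ((i : ℤ) + r), P i) then 1 else 0) =
      ∑ i ∈ range (orderOf g), if y = P i then f (i + r) else 0 := by
  simp_rw [mul_sum, Prod.mk.injEq, ite_and, mul_ite, mul_one, mul_zero]
  rw [sum_comm]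
  refine sum_congr rfl fun i _ => ?_
  split_ifs
  · exact sum_range_orderOf_ite_zpow_eq hg hf _
  · simp

end OrderOf

theorem Units.val_pow_eq_val_pow_add_iff {M : Type*} [Monoid M] (u : Mˣ) (t i s : ℕ) :
    (u : M) ^ t = (u : M) ^ (i + s) ↔ u ^ (i : ℤ) = u ^ ((t : ℤ) - s) := by
  rw [← Units.val_pow_eq_pow_val, ← Units.val_pow_eq_pow_val, Units.val_inj, zpow_sub,
    _root_.eq_mul_inv_iff_mul_eq, ← zpow_add, ← Nat.cast_add, zpow_natCast, zpow_natCast, eq_comm]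

theorem sum_range_mul_sum_range_ite_add_pow_eq {R M : Type*} [Ring R] [DecidableEq R]
    [Semiring M] {u : Rˣ} {f : ℤ → M} (hu : IsOfFinOrder u)
    (hf : Periodic f (orderOf u)) (c : R) (r : ℤ) (s t : ℕ) :
    ∑ j ∈ range (orderOf u), f j * ∑ i ∈ range (orderOf u),
        (if (u ^ (j : ℤ), c + (u : R) ^ t) = (u ^ ((i : ℤ) + r), c + (u : R) ^ (i + s))
          then 1 else 0) =
      f (t - s + r) := by
  simp only [sum_range_mul_sum_range_ite_prod_eq hu hf, add_right_inj,
    Units.val_pow_eq_val_pow_add_iff]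
  exact sum_range_orderOf_ite_zpow_eq hu (hf.add_const r) _

/-- For `u = 1` both sides are `x`, since division by zero gives `0`. -/
theorem pow_mul_add_div_sub_one_mul_eq {F : Type*} [Field F] (u b x : F) (j : ℕ) :
    u ^ j * x + (u ^ j - 1) / (u - 1) * b = b / (1 - u) + u ^ j * (x - b / (1 - u)) := by
  rcases eq_or_ne u 1 with rfl | hu
  · simp
  have h1 : u - 1 ≠ 0 := sub_ne_zero.2 hu
  have h2 : 1 - u ≠ 0 := sub_ne_zero.2 hu.symm
  field_simp
  ring

section Generator

variable {F : Type*} [Field F] {u : Fˣ}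

theorem orderOf_eq_card_sub_one [Fintype F] [DecidableEq F]
    (hu : ∀ g : Fˣ, g ∈ Subgroup.zpowers u) : orderOf u = Fintype.card F - 1 := by
  rw [orderOf_eq_card_of_forall_mem_zpowers hu, Nat.card_eq_fintype_card, Fintype.card_units]

theorem exists_eq_add_val_pow [Finite F] (hu : ∀ g : Fˣ, g ∈ Subgroup.zpowers u) {y c : F}
    (hy : y ≠ c) : ∃ t : ℕ, y = c + (u : F) ^ t := by
  obtain ⟨t, ht⟩ := mem_powers_iff_mem_zpowers.2 (hu (Units.mk0 (y - c) (sub_ne_zero.2 hy)))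
  exact ⟨t, by rw [← Units.val_pow_eq_pow_val, show u ^ t = _ from ht, Units.val_mk0,
    add_sub_cancel]⟩

end Generator

theorem statement_9_general {F : Type*} [Field F] [Fintype F] [DecidableEq F]
    (u : Fˣ) (hu : ∀ g : Fˣ, g ∈ Subgroup.zpowers u)
    (ζ : ℂ) (hζ : ζ = Complex.exp (2 * Real.pi * Complex.I / ((Fintype.card F : ℂ) - 1)))
    (φ : ℤ → F → ℂ) (hφzero : ∀ m : ℤ, φ m 0 = 0)
    (hφ : ∀ (m : ℤ) (j : ℕ), φ m ((u : F) ^ j) =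
      ζ ^ (-(m * (j : ℤ))) / (Real.sqrt ((Fintype.card F : ℝ) - 1) : ℂ))
    (b x : F) (r : ℤ) (hx : x ≠ b / (1 - (u : F)))
    (v w : Fˣ × F → ℂ)
    (hv : v = fun p => (1 / (Real.sqrt ((Fintype.card F : ℝ) - 1) : ℂ)) *
      ∑ j ∈ Finset.range (Fintype.card F - 1),
        if p = (u ^ ((j : ℤ) + r),
            (u : F) ^ j * x + (((u : F) ^ j - 1) / ((u : F) - 1)) * b)
          then 1 else 0)
    (hw : ∀ (k : ℤ) (y : F), w (u ^ k, y) =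
      (1 / (Real.sqrt ((Fintype.card F : ℝ) - 1) : ℂ)) *
        ∑ j ∈ Finset.range (Fintype.card F - 1), ζ ^ (k * (j : ℤ)) * v (u ^ (j : ℤ), y)) :
    (∀ y : F, y ≠ b / (1 - (u : F)) → w (1, y) = 1 / ((Fintype.card F : ℂ) - 1)) ∧
    w (1, b / (1 - (u : F))) = 0 ∧
    (∀ k : ℤ, ζ ^ k ≠ 1 → ∃ z : ℂ, z ≠ 0 ∧
      (fun y => w (u ^ k, y)) = z • fun y => φ (-k) (y - b / (1 - (u : F)))) := by
  set c := b / (1 - (u : F)) with hc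
  set S : ℂ := (Real.sqrt ((Fintype.card F : ℝ) - 1) : ℂ)
  have hcard : 1 < Fintype.card F := Fintype.one_lt_card
  have hS : S * S = (Fintype.card F : ℂ) - 1 := by
    rw [← Complex.ofReal_mul, Real.mul_self_sqrt (by simp [hcard.le])]
    push_cast; ring
  have hS0 : S ≠ 0 := Complex.ofReal_ne_zero.2 (Real.sqrt_pos.2 (by simpa using hcard)).ne'
  have hζ0 : ζ ≠ 0 := hζ ▸ Complex.exp_ne_zero _
  have horder := orderOf_eq_card_sub_one hu
  have hper (k : ℤ) :=
    horder ▸ periodic_zpow_mul (hζ ▸ Complex.exp_two_pi_I_div_natCast_sub_one_pow _) k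
  obtain ⟨s, hs⟩ := exists_eq_add_val_pow hu hx
  have hw_sum (k : ℤ) (y : F) : w (u ^ k, y) = (∑ j ∈ range (orderOf u), ζ ^ (k * j) *
      ∑ i ∈ range (orderOf u), (if (u ^ (j : ℤ), y) = (u ^ ((i : ℤ) + r), c + (u : F) ^ (i + s))
        then 1 else 0)) / (S * S) := by
    simp only [hw, hv, pow_mul_add_div_sub_one_mul_eq, ← hc, hs, add_sub_cancel_left, ← pow_add,
      ← horder,
      mul_left_comm _ (1 / S), ← mul_sum]
    ring
  have hw_c (k : ℤ) : w (u ^ k, c) = 0 := by simp [hw_sum, ← Units.val_pow_eq_pow_val]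
  have hw_t (k : ℤ) (t : ℕ) : w (u ^ k, c + (u : F) ^ t) = ζ ^ (k * (t - s + r)) / (S * S) := by
    rw [hw_sum, sum_range_mul_sum_range_ite_add_pow_eq (isOfFinOrder_of_finite u) (hper k)]
  refine ⟨fun y hy => ?_, by simpa using hw_c 0, fun k _ => ?_⟩
  · obtain ⟨t, rfl⟩ := exists_eq_add_val_pow hu hy
    simpa [hS] using hw_t 0 t
  refine ⟨ζ ^ (k * (r - s)) / S, div_ne_zero (zpow_ne_zero _ hζ0) hS0, funext fun y => ?_⟩
  by_cases hy : y = c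
  · simp [hy, hw_c, hφzero]
  obtain ⟨t, rfl⟩ := exists_eq_add_val_pow hu hy
  rw [hw_t, Pi.smul_apply, smul_eq_mul, add_sub_cancel_left, hφ, neg_mul, neg_neg,
    div_mul_div_comm, ← zpow_add₀ hζ0]
  ring_nf

/-- Let `x ≠ b/(1-u)` and
`v = (1/√(q-1)) Σ_{j=0}^{q-2} δ_{u^{j+r}} ⊗ δ_{u^j x + ((u^j-1)/(u-1))b}` in `L²(F^× × F)`,
and let `w = (F_M ⊗ I)v` (characterized by `w(u^k, y) = (1/√(q-1)) Σ_j ζ^{kj} v(u^j, y)`).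
Then (i) `w(1, y) = 1/(q-1)` for `y ≠ b/(1-u)` and `w(1, b/(1-u)) = 0`, and
(ii) for every integer `k` with `ζ^k ≠ 1`, the function `y ↦ w(u^k, y)` is a nonzero scalar
multiple of `φ_{-k, b/(1-u)}`, where `φ_{m,0}` is the function with `φ_{m,0}(0) = 0` and
`φ_{m,0}(u^j) = ζ^{-mj}/√(q-1)`, and `φ_{m,v}(y) = φ_{m,0}(y-v)`. -/
theorem statement_9 {F : Type*} [Field F] [Fintype F] [DecidableEq F]
    (hq : 2 < Fintype.card F)
    (u : Fˣ) (hu : ∀ g : Fˣ, g ∈ Subgroup.zpowers u)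
    (ζ : ℂ) (hζ : ζ = Complex.exp (2 * Real.pi * Complex.I / ((Fintype.card F : ℂ) - 1)))
    (φ : ℤ → F → ℂ) (hφzero : ∀ m : ℤ, φ m 0 = 0)
    (hφ : ∀ (m : ℤ) (j : ℕ), φ m ((u : F) ^ j) =
      ζ ^ (-(m * (j : ℤ))) / (Real.sqrt ((Fintype.card F : ℝ) - 1) : ℂ))
    (b x : F) (r : ℤ) (hx : x ≠ b / (1 - (u : F)))
    (v w : Fˣ × F → ℂ)
    (hv : v = fun p => (1 / (Real.sqrt ((Fintype.card F : ℝ) - 1) : ℂ)) *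
      ∑ j ∈ Finset.range (Fintype.card F - 1),
        if p = (u ^ ((j : ℤ) + r),
            (u : F) ^ j * x + (((u : F) ^ j - 1) / ((u : F) - 1)) * b)
          then 1 else 0)
    (hw : ∀ (k : ℤ) (y : F), w (u ^ k, y) =
      (1 / (Real.sqrt ((Fintype.card F : ℝ) - 1) : ℂ)) *
        ∑ j ∈ Finset.range (Fintype.card F - 1), ζ ^ (k * (j : ℤ)) * v (u ^ (j : ℤ), y)) :
    (∀ y : F, y ≠ b / (1 - (u : F)) → w (1, y) = 1 / ((Fintype.card F : ℂ) - 1)) ∧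
    w (1, b / (1 - (u : F))) = 0 ∧
    (∀ k : ℤ, ζ ^ k ≠ 1 → ∃ z : ℂ, z ≠ 0 ∧
      (fun y => w (u ^ k, y)) = z • fun y => φ (-k) (y - b / (1 - (u : F)))) :=
  statement_9_general u hu ζ hζ φ hφzero hφ b x r hx v w hv hw
end

section
/- Let b ∈ F and let w ∈ L²(F) be defined by w(s) = η(sb)/√(q−1) for s ∈ F^× and w(0) = 0. Then F_A^{−1} w = −ψ_b; explicitly, (F_A^{−1} w)(b) = √((q−1)/q) and (F_A^{−1} w)(t) = −1/√(q(q−1)) for every t ≠ b. In particular |(F_A^{−1} w)(b)|² = (q−1)/q. -/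
/-- The inverse additive Fourier transform `(F_A⁻¹ f)(t) = (1/√q) Σ_{z ∈ F} η(-tz) f(z)`. -/
noncomputable def invAddFourier {F : Type*} [Field F] [Fintype F]
    (η : F → ℂ) (f : F → ℂ) (t : F) : ℂ :=
  (1 / (Real.sqrt (Fintype.card F) : ℂ)) * ∑ z : F, η (-(t * z)) * f z

/-! The integrand `η(-tz) w(z)` is `η(z(b - t))/√(q-1)` on `z ≠ 0`, and orthogonality of the
nontrivial character `η` gives `∑_{z ≠ 0} η(zc) = q·[c = 0] - 1`. -/

lemma map_zero_eq_one_of_map_add_eq_mul {G M : Type*} [AddZeroClass G] [MonoidWithZero M]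
    [IsCancelMulZero M] {η : G → M} (hadd : ∀ x y, η (x + y) = η x * η y) (h0 : η 0 ≠ 0) :
    η 0 = 1 :=
  mul_left_cancel₀ h0 (by rw [← hadd, add_zero, mul_one])

def addCharOfNormOne {G K : Type*} [AddMonoid G] [NormedDivisionRing K] (η : G → K)
    (hadd : ∀ x y, η (x + y) = η x * η y) (habs : ∀ x, ‖η x‖ = 1) : AddChar G K where
  toFun := η
  map_zero_eq_one' := map_zero_eq_one_of_map_add_eq_mul hadd (norm_ne_zero_iff.1 (by simp [habs]))
  map_add_eq_mul' := hadd

lemma AddChar.sum_ite_zero_mulShift {R R' : Type*} [Field R] [Fintype R] [DecidableEq R]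
    [CommRing R'] [IsDomain R'] {ψ : AddChar R R'} (hψ : ψ ≠ 1) (c : R) :
    ∑ z, (if z = 0 then 0 else ψ (z * c)) = (if c = 0 then (Fintype.card R : R') else 0) - 1 := by
  have hsum := AddChar.sum_mulShift c (AddChar.IsPrimitive.of_ne_one hψ)
  push_cast at hsum
  simp [Finset.sum_ite, Finset.filter_ne', Finset.sum_erase_eq_sub, hsum]

section FiniteField

variable {F : Type*} [Field F] [Fintype F]

local notation "q" => (Fintype.card F : ℝ)

lemma one_lt_card_real : 1 < q := by exact_mod_cast Fintype.one_lt_card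

variable [DecidableEq F]

lemma invAddFourier_shifted_char {ψ : AddChar F ℂ} (hψ : ψ ≠ 1) (b t : F) :
    invAddFourier ψ (fun s => if s = 0 then 0 else ψ (s * b) / (√(q - 1) : ℂ)) t =
      ((if t = b then (q : ℂ) else 0) - 1) / (√q * √(q - 1) : ℝ) := by
  have hterm : ∀ z, ψ (-(t * z)) * (if z = 0 then 0 else ψ (z * b) / (√(q - 1) : ℂ)) =
      (if z = 0 then 0 else ψ (z * (b - t))) / (√(q - 1) : ℂ) := by
    intro z
    split_ifs
    · simp [div_eq_mul_inv]
    · rw [← mul_div_assoc, ← AddChar.map_add_eq_mul]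
      congr 3
      ring
  simp only [invAddFourier, hterm, ← Finset.sum_div, AddChar.sum_ite_zero_mulShift hψ, sub_eq_zero,
    eq_comm (a := b)]
  push_cast
  ring

lemma psi_apply (v t : F) :
    psi F v t = (1 - if t = v then (q : ℂ) else 0) / (√q * √(q - 1) : ℝ) := by
  have hq1 : (0 : ℝ) < q - 1 := sub_pos.2 one_lt_card_real
  have hsqrt : (√(q - 1) : ℂ) ≠ 0 := by exact_mod_cast (Real.sqrt_pos.2 hq1).ne'
  have hsq : (√(q - 1) : ℂ) ^ 2 = q - 1 := by exact_mod_cast Real.sq_sqrt hq1.le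
  simp only [psi, psi0, phi00, sub_eq_zero]
  split_ifs
  · push_cast
    field_simp
    linear_combination -hsq
  · simp [div_eq_mul_inv]

end FiniteField

/-- For `w ∈ L²(F)` with `w(s) = η(sb)/√(q-1)` for `s ≠ 0` and `w(0) = 0`, one has
`F_A⁻¹ w = -ψ_b`; explicitly `(F_A⁻¹ w)(b) = √((q-1)/q)` and `(F_A⁻¹ w)(t) = -1/√(q(q-1))`
for `t ≠ b`.  In particular `|(F_A⁻¹ w)(b)|² = (q-1)/q`. -/
theorem statement_13 {F : Type*} [Field F] [Fintype F] [DecidableEq F]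
    (η : F → ℂ) (hηadd : ∀ x y : F, η (x + y) = η x * η y)
    (hηabs : ∀ x : F, ‖η x‖ = 1) (hηnt : ∃ x : F, η x ≠ 1)
    (b : F)
    (w : F → ℂ)
    (hw : w = fun s => if s = 0 then 0
      else η (s * b) / (Real.sqrt ((Fintype.card F : ℝ) - 1) : ℂ)) :
    invAddFourier η w = -psi F b ∧
    invAddFourier η w b =
      (Real.sqrt (((Fintype.card F : ℝ) - 1) / (Fintype.card F : ℝ)) : ℂ) ∧
    (∀ t : F, t ≠ b → invAddFourier η w t =
      -(1 / (Real.sqrt ((Fintype.card F : ℝ) * ((Fintype.card F : ℝ) - 1)) : ℂ))) ∧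
    ‖invAddFourier η w b‖ ^ 2 =
      ((Fintype.card F : ℝ) - 1) / (Fintype.card F : ℝ) := by
  have hval : ∀ t, invAddFourier η w t =
      ((if t = b then ((Fintype.card F : ℝ) : ℂ) else 0) - 1) /
        (√(Fintype.card F : ℝ) * √((Fintype.card F : ℝ) - 1) : ℝ) := by
    subst hw
    exact invAddFourier_shifted_char (ψ := addCharOfNormOne η hηadd hηabs)
      (AddChar.ne_one_iff.2 hηnt) b
  set q : ℝ := (Fintype.card F : ℝ)
  have hq1 : 0 ≤ q - 1 := sub_nonneg.2 one_lt_card_real.le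
  have hb_real : (q - 1) / (√q * √(q - 1)) = √((q - 1) / q) := by
    rw [mul_comm, ← div_div, Real.div_sqrt, Real.sqrt_div hq1]
  have hb : invAddFourier η w b = √((q - 1) / q) := by
    rw [hval, if_pos rfl, ← hb_real]
    push_cast
    rfl
  refine ⟨funext fun t => ?_, hb, fun t ht => ?_, ?_⟩
  · rw [hval, Pi.neg_apply, psi_apply]
    ring
  · rw [hval, if_neg ht, Real.sqrt_mul (Nat.cast_nonneg _)]
    push_cast
    ring
  · rw [hb, Complex.norm_real, Real.norm_of_nonneg (Real.sqrt_nonneg _),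
      Real.sq_sqrt (div_nonneg hq1 (Nat.cast_nonneg _))]
end

section
/- Let p be a prime and let n be an odd prime. Then, with φ denoting Euler's totient function, φ(p^n − 1)/(p^n − 1) ≥ (1 − 1/(2n+1))^n · ∏_{l prime, l < p} (1 − 1/l), where the product is over all primes l with l < p. -/
/-!
By Euler's product formula, `φ(N)/N = ∏_{q ∣ N} (1 - 1/q)` for `N = p^n - 1`. The prime
factors `q < p` form a subset of the primes below `p`, and all factors lie in `[0, 1]`, so
their product is at least `∏_{l < p} (1 - 1/l)`. A prime factor `q ≥ p` does not divide
`p - 1`, so `p` has order exactly `n` modulo `q`; hence `n ∣ q - 1`, and as `q` and `n` are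
odd, `q ≡ 1 [MOD 2n]`, i.e. `q ≥ 2n + 1`. There are fewer than `n` of them, since their
product is at least `p^k` and divides `N < p^n`.
-/

open Finset

theorem Nat.totient_div_self_eq_prod_primeFactors {N : ℕ} (hN : N ≠ 0) :
    (N.totient : ℝ) / N = ∏ q ∈ N.primeFactors, (1 - 1 / (q : ℝ)) := by
  have h := congrArg (fun x : ℚ => (x : ℝ)) (Nat.totient_eq_mul_prod_factors N)
  push_cast at h
  rw [h, mul_div_cancel_left₀ _ (Nat.cast_ne_zero.mpr hN)]
  simp only [one_div]

theorem Nat.pow_card_filter_primeFactors_le {N : ℕ} (hN : N ≠ 0) (b : ℕ) :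
    b ^ #{q ∈ N.primeFactors | b ≤ q} ≤ N :=
  calc b ^ #{q ∈ N.primeFactors | b ≤ q}
      ≤ ∏ q ∈ N.primeFactors with b ≤ q, q :=
        pow_card_le_prod _ _ _ fun _ hq => (mem_filter.mp hq).2
    _ ≤ ∏ q ∈ N.primeFactors, q := prod_le_prod_of_subset_of_one_le' (filter_subset _ _)
        fun _ hq _ => (Nat.prime_of_mem_primeFactors hq).one_le
    _ ≤ N := Nat.le_of_dvd (Nat.pos_of_ne_zero hN) (Nat.prod_primeFactors_dvd N)

theorem Nat.Prime.dvd_sub_one_of_dvd_pow_sub_one {a n q : ℕ} (hn : n.Prime) (hq : q.Prime)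
    (hdvd : q ∣ a ^ n - 1) (hndvd : ¬ q ∣ a - 1) : n ∣ q - 1 := by
  have := Fact.mk hn
  have := Fact.mk hq
  have ha : 1 ≤ a := by
    by_contra! h
    obtain rfl : a = 0 := by omega
    exact hndvd (by simp)
  have hpow : (a : ZMod q) ^ n = 1 := by
    have := (ZMod.natCast_eq_zero_iff _ _).mpr hdvd
    rwa [Nat.cast_sub (Nat.one_le_pow _ _ ha), sub_eq_zero, Nat.cast_pow, Nat.cast_one] at this
  have hne1 : (a : ZMod q) ≠ 1 := by
    rwa [ne_eq, ← sub_eq_zero, ← Nat.cast_one, ← Nat.cast_sub ha, ZMod.natCast_eq_zero_iff]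
  have hne0 : (a : ZMod q) ≠ 0 := fun h => by simp [h, hn.ne_zero] at hpow
  exact orderOf_eq_prime hpow hne1 ▸ ZMod.orderOf_dvd_card_sub_one hne0

theorem Nat.Prime.two_mul_add_one_le_of_dvd_pow_sub_one {a n q : ℕ} (hn : n.Prime)
    (hnodd : Odd n) (hq : q.Prime) (hdvd : q ∣ a ^ n - 1) (ha : 2 ≤ a) (haq : a ≤ q) :
    2 * n + 1 ≤ q := by
  have hnq : n ∣ q - 1 :=
    hn.dvd_sub_one_of_dvd_pow_sub_one hq hdvd (Nat.not_dvd_of_pos_of_lt (by omega) (by omega))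
  have hq2 : q ≠ 2 := by
    rintro rfl
    exact hn.ne_one (Nat.dvd_one.mp hnq)
  have h2q : 2 ∣ q - 1 := by obtain ⟨k, hk⟩ := hq.odd_of_ne_two hq2; omega
  have h2n : 2 * n ∣ q - 1 := (Nat.coprime_two_left.mpr hnodd).mul_dvd_of_dvd_of_dvd h2q hnq
  have := Nat.le_of_dvd (by have := hq.two_le; omega) h2n
  omega

theorem pow_one_sub_one_div_le_prod {S : Finset ℕ} {m : ℝ} {k : ℕ} (hm : 1 ≤ m)
    (hS : ∀ q ∈ S, m ≤ q) (hk : #S ≤ k) :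
    (1 - 1 / m) ^ k ≤ ∏ q ∈ S, (1 - 1 / (q : ℝ)) := by
  have hc0 : 0 ≤ 1 - 1 / m := sub_nonneg.mpr (div_le_one_of_le₀ hm (by linarith))
  have hc1 : 1 - 1 / m ≤ 1 := sub_le_self _ (by positivity)
  calc (1 - 1 / m) ^ k ≤ (1 - 1 / m) ^ #S := pow_le_pow_of_le_one hc0 hc1 hk
    _ = ∏ q ∈ S, (1 - 1 / m) := (prod_const _).symm
    _ ≤ ∏ q ∈ S, (1 - 1 / (q : ℝ)) := prod_le_prod (fun _ _ => hc0) fun q hq =>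
        sub_le_sub_left (one_div_le_one_div_of_le (by linarith) (hS q hq)) 1

theorem one_sub_one_div_natCast_nonneg (q : ℕ) : 0 ≤ 1 - 1 / (q : ℝ) := by
  rcases q.eq_zero_or_pos with rfl | hq
  · simp
  · exact sub_nonneg.mpr (div_le_one_of_le₀ (by exact_mod_cast hq) (by positivity))

/-- For `p` a prime and `n` an odd prime,
`φ(p^n - 1)/(p^n - 1) ≥ (1 - 1/(2n+1))^n · ∏_{l prime, l < p} (1 - 1/l)`. -/
theorem statement_17 (p n : ℕ) (hp : p.Prime) (hn : n.Prime) (hnodd : Odd n) :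
    ((Nat.totient (p ^ n - 1) : ℝ)) / ((p ^ n - 1 : ℕ) : ℝ) ≥
      (1 - 1 / (2 * (n : ℝ) + 1)) ^ n *
        ∏ l ∈ (Finset.range p).filter Nat.Prime, (1 - 1 / (l : ℝ)) := by
  set N := p ^ n - 1
  have hNp : N < p ^ n := Nat.sub_lt (pow_pos hp.pos n) one_pos
  have hN : N ≠ 0 := by have := Nat.one_lt_pow hn.ne_zero hp.one_lt; omega
  have hlarge : (1 - 1 / (2 * (n : ℝ) + 1)) ^ n ≤
      ∏ q ∈ N.primeFactors with p ≤ q, (1 - 1 / (q : ℝ)) := by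
    refine pow_one_sub_one_div_le_prod (by linarith [(n.cast_nonneg : (0 : ℝ) ≤ n)])
      (fun q hq => ?_) ?_
    · obtain ⟨hqN, hpq⟩ := mem_filter.mp hq
      exact_mod_cast hn.two_mul_add_one_le_of_dvd_pow_sub_one hnodd
        (Nat.prime_of_mem_primeFactors hqN) (Nat.dvd_of_mem_primeFactors hqN) hp.two_le hpq
    · exact ((Nat.pow_lt_pow_iff_right hp.one_lt).mp
        ((Nat.pow_card_filter_primeFactors_le hN p).trans_lt hNp)).le
  have hsmall : ∏ l ∈ (range p).filter Nat.Prime, (1 - 1 / (l : ℝ)) ≤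
      ∏ q ∈ N.primeFactors with ¬ p ≤ q, (1 - 1 / (q : ℝ)) :=
    prod_le_prod_of_subset_of_le_one
      (fun q hq => by
        obtain ⟨hqN, hqp⟩ := mem_filter.mp hq
        exact mem_filter.mpr ⟨mem_range.mpr (not_le.mp hqp), Nat.prime_of_mem_primeFactors hqN⟩)
      (fun q _ => one_sub_one_div_natCast_nonneg q) fun q _ _ => sub_le_self _ (by positivity)
  rw [ge_iff_le, Nat.totient_div_self_eq_prod_primeFactors hN,
    ← prod_filter_mul_prod_filter_not N.primeFactors (p ≤ ·)]
  exact mul_le_mul hlarge hsmall (prod_nonneg fun l _ => one_sub_one_div_natCast_nonneg l)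
    (prod_nonneg fun q _ => one_sub_one_div_natCast_nonneg q)
end
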